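/- arXiv:1511.08742 — 5 statements merged into one kernel-verified Lean document; each statement's English description precedes it below -/
import Mathlib

section
/- For every u ≥ 0 and every nonnegative integer i, ∫_u^∞ [(i+1)(z−u)^i − (z−u)^{i+2}] ψ(z) dz ≥ 0, where ψ is the standard Gaussian density. -/
/-!
Since `ψ' = -z ψ`, the integrand `((i+1)(z-u)^i - z (z-u)^(i+1)) ψ` is the derivative of
`(z-u)^(i+1) ψ`, which vanishes at `u` and, being integrable with integrable derivative, at `∞`;
so its integral over `(u, ∞)` is zero. The integrand of the theorem exceeds it by
`u (z-u)^(i+1) ψ ≥ 0`.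
-/

open MeasureTheory Real

noncomputable def gaussPsi (x : ℝ) : ℝ := Real.exp (-x^2/2) / Real.sqrt (2 * Real.pi)

open Filter Set Polynomial

lemma gaussPsi_nonneg (x : ℝ) : 0 ≤ gaussPsi x :=
  div_nonneg (exp_pos _).le (sqrt_nonneg _)

lemma hasDerivAt_gaussPsi (z : ℝ) : HasDerivAt gaussPsi (-z * gaussPsi z) z := by
  have h : HasDerivAt (fun x : ℝ => -x ^ 2 / 2) (-z) z := by
    simpa using ((hasDerivAt_pow 2 z).neg.div_const 2).congr_deriv (by ring)
  refine (h.exp.div_const (√(2 * π))).congr_deriv ?_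
  unfold gaussPsi
  ring

lemma integrable_pow_mul_gaussPsi (n : ℕ) : Integrable fun z : ℝ => z ^ n * gaussPsi z := by
  have h := (integrable_rpow_mul_exp_neg_mul_sq (b := 1 / 2) (by norm_num)
    (s := n) (by linarith [n.cast_nonneg (α := ℝ)])).div_const (√(2 * π))
  refine h.congr (ae_of_all _ fun z => ?_)
  simp only [rpow_natCast, gaussPsi]
  ring_nf

lemma integrable_eval_mul_gaussPsi (p : ℝ[X]) : Integrable fun z : ℝ => p.eval z * gaussPsi z := by
  simp_rw [eval_eq_sum_range, Finset.sum_mul]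
  exact integrable_finsetSum _ fun n _ => by
    simpa only [mul_assoc] using (integrable_pow_mul_gaussPsi n).const_mul (p.coeff n)

lemma integrable_sub_pow_mul_gaussPsi (u : ℝ) (k : ℕ) :
    Integrable fun z : ℝ => (z - u) ^ k * gaussPsi z :=
  (integrable_eval_mul_gaussPsi ((X - C u) ^ k)).congr (ae_of_all _ fun z => by simp)

lemma integrable_deriv_sub_pow_mul_gaussPsi (u : ℝ) (k : ℕ) :
    Integrable fun z : ℝ => ((k + 1 : ℝ) * (z - u) ^ k - z * (z - u) ^ (k + 1)) * gaussPsi z :=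
  (integrable_eval_mul_gaussPsi ((k + 1 : ℝ[X]) * (X - C u) ^ k - X * (X - C u) ^ (k + 1))).congr
    (ae_of_all _ fun z => by simp)

lemma integral_Ioi_deriv_sub_pow_mul_gaussPsi (u : ℝ) (k : ℕ) :
    ∫ z in Ioi u, ((k + 1 : ℝ) * (z - u) ^ k - z * (z - u) ^ (k + 1)) * gaussPsi z = 0 := by
  have hf : ∀ z, HasDerivAt (fun z => (z - u) ^ (k + 1) * gaussPsi z)
      (((k + 1 : ℝ) * (z - u) ^ k - z * (z - u) ^ (k + 1)) * gaussPsi z) z := fun z => by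
    refine ((((hasDerivAt_id' z).sub_const u).fun_pow (k + 1)).mul
      (hasDerivAt_gaussPsi z)).congr_deriv ?_
    push_cast
    ring
  have hf' := (integrable_deriv_sub_pow_mul_gaussPsi u k).integrableOn (s := Ioi u)
  have hf_lim := tendsto_zero_of_hasDerivAt_of_integrableOn_Ioi (fun z _ => hf z) hf'
    (integrable_sub_pow_mul_gaussPsi u (k + 1)).integrableOn
  rw [integral_Ioi_of_hasDerivAt_of_tendsto' (fun z _ => hf z) hf' hf_lim]
  simp

theorem integral_moment_diff_nonneg (u : ℝ) (hu : 0 ≤ u) (i : ℕ) :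
    0 ≤ ∫ z in Set.Ioi u, ((i + 1 : ℝ) * (z - u)^i - (z - u)^(i + 2)) * gaussPsi z := by
  have h_split : ∀ z : ℝ, ((i + 1 : ℝ) * (z - u) ^ i - (z - u) ^ (i + 2)) * gaussPsi z =
      ((i + 1 : ℝ) * (z - u) ^ i - z * (z - u) ^ (i + 1)) * gaussPsi z +
        u * ((z - u) ^ (i + 1) * gaussPsi z) := fun z => by ring
  simp_rw [h_split]
  rw [integral_add (integrable_deriv_sub_pow_mul_gaussPsi u i).integrableOn
    ((integrable_sub_pow_mul_gaussPsi u (i + 1)).const_mul u).integrableOn,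
    integral_Ioi_deriv_sub_pow_mul_gaussPsi, zero_add]
  refine setIntegral_nonneg measurableSet_Ioi fun z hz => ?_
  have hψ := gaussPsi_nonneg z
  have hzu : 0 ≤ z - u := sub_nonneg.2 (le_of_lt hz)
  positivity
end

section
/- For 0 ≤ u ≤ A, the expression u(A−u)[ψ(u) − u Q(u)] + (A+u) Q(u) is positive, where ψ is the standard Gaussian density and Q its tail function. -/
/-! Since `z ψ(z) = -ψ'(z)`, integrating over `(u, ∞)` gives `ψ(u) = ∫_u^∞ z ψ(z) dz ≥ u Q(u)`
(the Mills-ratio bound). Hence the first summand is nonnegative for `0 ≤ u ≤ A`, while the second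
is positive because `Q > 0` and `A + u > 0`. -/

open MeasureTheory Real

noncomputable def gaussQ (x : ℝ) : ℝ := ∫ z in Set.Ioi x, gaussPsi z

lemma gaussPsi_pos (x : ℝ) : 0 < gaussPsi x :=
  div_pos (exp_pos _) (sqrt_pos.2 (by positivity))

lemma integrable_gaussPsi : Integrable gaussPsi := by
  refine ((integrable_exp_neg_mul_sq (by norm_num : (0 : ℝ) < 1 / 2)).div_const
    (√(2 * π))).congr (Filter.Eventually.of_forall fun x => ?_)
  simp only [gaussPsi]
  ring_nf

lemma integrable_mul_gaussPsi : Integrable fun z => z * gaussPsi z := by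
  refine ((integrable_mul_exp_neg_mul_sq (by norm_num : (0 : ℝ) < 1 / 2)).div_const
    (√(2 * π))).congr (Filter.Eventually.of_forall fun z => ?_)
  simp only [gaussPsi]
  ring_nf

lemma gaussQ_pos (x : ℝ) : 0 < gaussQ x := by
  refine (setIntegral_pos_iff_support_of_nonneg_ae
    (Filter.Eventually.of_forall fun z => (gaussPsi_pos z).le)
    integrable_gaussPsi.integrableOn).2 ?_
  have hsupp : Function.support gaussPsi = Set.univ :=
    Set.eq_univ_of_forall fun z => (gaussPsi_pos z).ne'
  simp [hsupp, volume_Ioi]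

lemma hasDerivAt_neg_gaussPsi (x : ℝ) :
    HasDerivAt (fun y => -gaussPsi y) (x * gaussPsi x) x := by
  have hexponent : HasDerivAt (fun y : ℝ => -y ^ 2 / 2) (-x) x :=
    ((hasDerivAt_pow 2 x).neg.div_const 2).congr_deriv (by ring)
  exact ((hexponent.exp.div_const (√(2 * π))).neg).congr_deriv (by simp only [gaussPsi]; ring)

lemma tendsto_gaussPsi_atTop : Filter.Tendsto gaussPsi Filter.atTop (nhds 0) := by
  have hexponent : Filter.Tendsto (fun x : ℝ => -x ^ 2 / 2) Filter.atTop Filter.atBot :=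
    (Filter.tendsto_neg_atBot_iff.2 (Filter.tendsto_pow_atTop two_ne_zero)).atBot_div_const
      two_pos
  rw [← zero_div (√(2 * π))]
  exact (tendsto_exp_atBot.comp hexponent).div_const (√(2 * π))

lemma setIntegral_Ioi_mul_gaussPsi (u : ℝ) : ∫ z in Set.Ioi u, z * gaussPsi z = gaussPsi u := by
  rw [integral_Ioi_of_hasDerivAt_of_tendsto' (fun x _ => hasDerivAt_neg_gaussPsi x)
    integrable_mul_gaussPsi.integrableOn tendsto_gaussPsi_atTop.neg]
  ring

lemma mul_gaussQ_le_gaussPsi (u : ℝ) : u * gaussQ u ≤ gaussPsi u := by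
  rw [← setIntegral_Ioi_mul_gaussPsi, gaussQ, ← integral_const_mul]
  exact setIntegral_mono_on (integrable_gaussPsi.integrableOn.const_mul u)
    integrable_mul_gaussPsi.integrableOn measurableSet_Ioi
    fun z hz => mul_le_mul_of_nonneg_right (le_of_lt hz) (gaussPsi_pos z).le

theorem expr_pos_low (A u : ℝ) (hA : 0 < A) (hu0 : 0 ≤ u) (huA : u ≤ A) :
    0 < u * (A - u) * (gaussPsi u - u * gaussQ u) + (A + u) * gaussQ u := by
  have hfirst : 0 ≤ u * (A - u) * (gaussPsi u - u * gaussQ u) :=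
    mul_nonneg (mul_nonneg hu0 (sub_nonneg.2 huA)) (sub_nonneg.2 (mul_gaussQ_le_gaussPsi u))
  have hsecond : 0 < (A + u) * gaussQ u := mul_pos (by linarith) (gaussQ_pos u)
  linarith
end

section
/- For every A > 0 and every x with 0 ≤ x ≤ A, the function g̃(x, A) = ∫_A^∞ e^{-(z²+x²)/2} I₀(z x) [1 − (z−A)²/2] z dz is positive, where I₀ is the modified Bessel function of the first kind of order 0. -/
/-!
Expanding `I₀` and exchanging the integrals, `g̃(x, A)` is an average over `φ ∈ [0, π]` of
`e^{(c² - x²)/2} ∫_A^∞ (1 - (z - A)²/2) z e^{-(z - c)²/2} dz` with `c = x cos φ ≤ A`, so it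
is enough that each inner integral is positive. With `p(z) = (z - A)((z - A)/2 + t)` the
inner integrand is `r(z) e^{-(z - c)²/2} + (p e^{-(z - c)²/2})'`, where
`r(z) = (t - c/2)(z - A)² + t(A - c)(z - A) + (A - t)`. The derivative term integrates to
`-p(A) e^{-(A - c)²/2} = 0`, and for `t = max 0 (c/2) < A` the coefficients of `r` in powers
of `z - A` are nonnegative with a positive constant term, so `r > 0` on `(A, ∞)`.
-/

open MeasureTheory Real intervalIntegral

noncomputable def besselI0 (x : ℝ) : ℝ := (1 / Real.pi) * ∫ φ in (0:ℝ)..Real.pi, Real.exp (x * Real.cos φ)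

open Filter Set Polynomial

theorem setIntegral_pos_of_forall_pos {X : Type*} [MeasurableSpace X] {μ : Measure X}
    {f : X → ℝ} {s : Set X} (hs : MeasurableSet s) (hμs : μ s ≠ 0) (hf : IntegrableOn f s μ)
    (hpos : ∀ x ∈ s, 0 < f x) : 0 < ∫ x in s, f x ∂μ := by
  rw [setIntegral_pos_iff_support_of_nonneg_ae
    (ae_restrict_of_forall_mem hs fun x hx ↦ (hpos x hx).le) hf]
  exact (pos_iff_ne_zero.2 hμs).trans_le (measure_mono fun x hx ↦ ⟨(hpos x hx).ne', hx⟩)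

section PolynomialTimesGaussian

variable (c : ℝ)

theorem integrable_eval_mul_exp_neg_sq_sub (p : ℝ[X]) :
    Integrable fun z ↦ p.eval z * exp (-(z - c) ^ 2 / 2) := by
  suffices h : ∀ q : ℝ[X], Integrable fun w ↦ q.eval w * exp (-w ^ 2 / 2) by
    have hshift := (h (p.comp (X + C c))).comp_sub_right c
    simp only [eval_comp] at hshift
    simpa only [eval_add, eval_X, eval_C, sub_add_cancel] using hshift
  intro q
  induction q using Polynomial.induction_on' with
  | add p q hp hq =>
    exact (hp.add hq).congr
      (.of_forall fun w ↦ by simp only [Pi.add_apply, eval_add, add_mul])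
  | monomial n a =>
    have h := integrable_rpow_mul_exp_neg_mul_sq (b := 1 / 2) (by norm_num) (s := n)
      (by linarith [n.cast_nonneg (α := ℝ)])
    refine (h.const_mul a).congr (.of_forall fun w ↦ ?_)
    simp only [rpow_natCast, eval_monomial]
    ring_nf

theorem integral_Ioi_derivative_sub_mul_eval_mul_exp (p : ℝ[X]) (a : ℝ) :
    ∫ z in Ioi a, (derivative p - (X - C c) * p).eval z * exp (-(z - c) ^ 2 / 2)
      = -(p.eval a * exp (-(a - c) ^ 2 / 2)) := by
  have hderiv : ∀ z, HasDerivAt (fun z ↦ p.eval z * exp (-(z - c) ^ 2 / 2))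
      ((derivative p - (X - C c) * p).eval z * exp (-(z - c) ^ 2 / 2)) z := by
    intro z
    have hE : HasDerivAt (fun z ↦ -(z - c) ^ 2 / 2) (-(z - c)) z :=
      ((((hasDerivAt_id z).sub_const c).pow 2).neg.div_const 2).congr_deriv (by simp; ring)
    refine ((p.hasDerivAt z).mul hE.exp).congr_deriv ?_
    simp only [eval_sub, eval_mul, eval_X, eval_C]
    ring
  have hlim := tendsto_zero_of_hasDerivAt_of_integrableOn_Ioi (a := a) (fun z _ ↦ hderiv z)
    (integrable_eval_mul_exp_neg_sq_sub c _).integrableOn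
    (integrable_eval_mul_exp_neg_sq_sub c p).integrableOn
  rw [integral_Ioi_of_hasDerivAt_of_tendsto' (fun z _ ↦ hderiv z)
    (integrable_eval_mul_exp_neg_sq_sub c _).integrableOn hlim, zero_sub]

end PolynomialTimesGaussian

theorem integral_Ioi_mul_exp_neg_sq_sub_pos {A c : ℝ} (hA : 0 < A) (hc : c ≤ A) :
    0 < ∫ z in Ioi A, (1 - (z - A) ^ 2 / 2) * z * exp (-(z - c) ^ 2 / 2) := by
  set t := max 0 (c / 2)
  have ht0 : 0 ≤ t := le_max_left _ _
  have htc : c / 2 ≤ t := le_max_right _ _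
  have htA : t < A := max_lt hA (by linarith)
  set p : ℝ[X] := (X - C A) * (C (1 / 2) * (X - C A) + C t)
  set r : ℝ[X] := C (t - c / 2) * (X - C A) ^ 2 + C (t * (A - c)) * (X - C A) + C (A - t)
  have hsplit : ∀ z, (1 - (z - A) ^ 2 / 2) * z * exp (-(z - c) ^ 2 / 2)
      = r.eval z * exp (-(z - c) ^ 2 / 2)
        + (derivative p - (X - C c) * p).eval z * exp (-(z - c) ^ 2 / 2) := by
    intro z
    rw [← add_mul]
    congr 1
    simp only [p, r, derivative_mul, derivative_add, derivative_sub, derivative_X, derivative_C,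
      eval_add, eval_sub, eval_mul, eval_pow, eval_X, eval_C, eval_one, eval_zero]
    ring
  have hr : ∀ z ∈ Ioi A, 0 < r.eval z * exp (-(z - c) ^ 2 / 2) := by
    intro z hz
    have hzA : 0 < z - A := sub_pos.2 hz
    simp only [r, eval_add, eval_sub, eval_mul, eval_pow, eval_X, eval_C]
    have h1 : 0 ≤ (t - c / 2) * (z - A) ^ 2 := mul_nonneg (by linarith) (sq_nonneg _)
    have h2 : 0 ≤ t * (A - c) * (z - A) := by positivity
    exact mul_pos (by linarith) (exp_pos _)
  rw [integral_congr_ae (.of_forall hsplit), integral_add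
    (integrable_eval_mul_exp_neg_sq_sub c r).integrableOn
    (integrable_eval_mul_exp_neg_sq_sub c _).integrableOn,
    integral_Ioi_derivative_sub_mul_eval_mul_exp]
  simp only [p, eval_mul, eval_sub, eval_X, eval_C, sub_self, zero_mul, neg_zero, add_zero]
  exact setIntegral_pos_of_forall_pos measurableSet_Ioi (by simp)
    (integrable_eval_mul_exp_neg_sq_sub c r).integrableOn hr

theorem exp_mul_besselI0_eq_integral (z x : ℝ) :
    exp (-(z ^ 2 + x ^ 2) / 2) * besselI0 (z * x)
      = ∫ φ in 0..π, π⁻¹ * exp (((x * cos φ) ^ 2 - x ^ 2) / 2)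
          * exp (-(z - x * cos φ) ^ 2 / 2) := by
  rw [besselI0, ← mul_assoc, ← intervalIntegral.integral_const_mul]
  refine intervalIntegral.integral_congr fun φ _ ↦ ?_
  rw [one_div, mul_comm (exp _), mul_assoc, ← exp_add, mul_assoc π⁻¹ (exp _), ← exp_add]
  congr 2
  ring

theorem exp_mul_exp_neg_sq_sub_mul_cos_le {z x : ℝ} (hz : 0 ≤ z) (hx : 0 ≤ x) (φ : ℝ) :
    exp (((x * cos φ) ^ 2 - x ^ 2) / 2) * exp (-(z - x * cos φ) ^ 2 / 2)
      ≤ exp (-(z - x) ^ 2 / 2) := by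
  rw [← exp_add, exp_le_exp]
  nlinarith [cos_le_one φ, mul_nonneg hz hx]

noncomputable def gTildeKernel (A x φ z : ℝ) : ℝ :=
  π⁻¹ * exp (((x * cos φ) ^ 2 - x ^ 2) / 2)
    * ((1 - (z - A) ^ 2 / 2) * z * exp (-(z - x * cos φ) ^ 2 / 2))

theorem integral_gTildeKernel_eq (A x z : ℝ) :
    ∫ φ in 0..π, gTildeKernel A x φ z
      = exp (-(z ^ 2 + x ^ 2) / 2) * besselI0 (z * x) * (1 - (z - A) ^ 2 / 2) * z := by
  rw [mul_assoc _ (1 - _), exp_mul_besselI0_eq_integral, ← intervalIntegral.integral_mul_const]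
  refine intervalIntegral.integral_congr fun φ _ ↦ ?_
  simp only [gTildeKernel]
  ring

theorem integral_gTildeKernel_pos {A x : ℝ} (hA : 0 < A) (hx : 0 ≤ x) (hxA : x ≤ A) (φ : ℝ) :
    0 < ∫ z in Ioi A, gTildeKernel A x φ z := by
  have hc : x * cos φ ≤ A := (mul_le_of_le_one_right hx (cos_le_one φ)).trans hxA
  simp only [gTildeKernel]
  rw [MeasureTheory.integral_const_mul]
  exact mul_pos (by positivity) (integral_Ioi_mul_exp_neg_sq_sub_pos hA hc)

theorem integrable_gTildeKernel {A x : ℝ} (hA : 0 ≤ A) (hx : 0 ≤ x) :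
    Integrable (Function.uncurry (gTildeKernel A x))
      ((volume.restrict (uIoc 0 π)).prod (volume.restrict (Ioi A))) := by
  set g : ℝ[X] := (1 - C (1 / 2) * (X - C A) ^ 2) * X
  have hg : ∀ z, g.eval z = (1 - (z - A) ^ 2 / 2) * z := fun z ↦ by
    simp only [g, eval_mul, eval_sub, eval_pow, eval_X, eval_C, eval_one]
    ring
  have hmaj : Integrable (fun p : ℝ × ℝ ↦ π⁻¹ * ‖g.eval p.2 * exp (-(p.2 - x) ^ 2 / 2)‖)
      ((volume.restrict (uIoc 0 π)).prod (volume.restrict (Ioi A))) :=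
    haveI : IsFiniteMeasure (volume.restrict (uIoc 0 π)) :=
      isFiniteMeasure_restrict.2 measure_Ioc_lt_top.ne
    ((integrable_eval_mul_exp_neg_sq_sub x g).norm.const_mul _).restrict.comp_snd _
  have hcont : Continuous (Function.uncurry (gTildeKernel A x)) := by
    unfold gTildeKernel Function.uncurry
    fun_prop
  refine hmaj.mono' hcont.aestronglyMeasurable ?_
  rw [Measure.prod_restrict]
  filter_upwards [ae_restrict_mem (measurableSet_uIoc.prod measurableSet_Ioi)] with p hp
  have hz : 0 ≤ p.2 := hA.trans hp.2.le
  simp only [Function.uncurry, gTildeKernel, hg, norm_mul, norm_inv,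
    norm_of_nonneg pi_pos.le, norm_of_nonneg (exp_pos _).le]
  have hg0 : 0 ≤ π⁻¹ * (‖1 - (p.2 - A) ^ 2 / 2‖ * ‖p.2‖) := by positivity
  linarith [mul_le_mul_of_nonneg_left (exp_mul_exp_neg_sq_sub_mul_cos_le hz hx p.1) hg0]

theorem gTilde_pos (A x : ℝ) (hA : 0 < A) (hx0 : 0 ≤ x) (hxA : x ≤ A) :
    0 < ∫ z in Set.Ioi A,
      Real.exp (-(z^2 + x^2)/2) * besselI0 (z * x) * (1 - (z - A)^2/2) * z := by
  have hF := integrable_gTildeKernel hA.le hx0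
  calc 0 < ∫ φ in 0..π, ∫ z in Ioi A, gTildeKernel A x φ z :=
        intervalIntegral_pos_of_pos_on (intervalIntegrable_iff.2 hF.integral_prod_left)
          (fun φ _ ↦ integral_gTildeKernel_pos hA hx0 hxA φ) pi_pos
    _ = ∫ z in Ioi A, ∫ φ in 0..π, gTildeKernel A x φ z :=
        intervalIntegral_integral_swap hF
    _ = _ := integral_congr_ae (.of_forall fun z ↦ integral_gTildeKernel_eq A x z)
end

section
/- For n ≥ 1 and A > 0, the normalizing constant k_n(A) = (2 / (2^{n/2} Γ(n/2))) ∫_A^∞ e^{-(r−A)²/2} r^{n−1} dr equals the finite sum Σ_{i=0}^{n−1} C(n−1, i) · Γ((n−i)/2) / (2^{i/2} Γ(n/2)) · A^i. -/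
/-!
Substituting `r = A + x` and expanding `(A + x)^(n-1)` binomially reduces the integral to the
half-line Gaussian moments `∫_0^∞ e^{-x²/2} x^k dx = 2^{(k-1)/2} Γ((k+1)/2)`, which are Gamma
integrals after `x² = 2t`; the rest is bookkeeping of powers of `2`.
-/

open MeasureTheory Real Finset

theorem setIntegral_Ioi_eq_setIntegral_Ioi_zero_add {E : Type*} [NormedAddCommGroup E]
    [NormedSpace ℝ E] (f : ℝ → E) (A : ℝ) :
    ∫ r in Set.Ioi A, f r = ∫ x in Set.Ioi 0, f (A + x) := by
  rw [← (measurePreserving_add_right volume A).setIntegral_preimage_emb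
    (measurableEmbedding_addRight A), Set.preimage_add_const_Ioi, sub_self]
  simp only [add_comm]

theorem integrableOn_Ioi_exp_neg_sq_div_two_mul_pow (k : ℕ) :
    IntegrableOn (fun x : ℝ => exp (-x ^ 2 / 2) * x ^ k) (Set.Ioi 0) := by
  refine (integrableOn_rpow_mul_exp_neg_mul_sq (b := 1 / 2) (by norm_num)
    (s := k) (by linarith [(Nat.cast_nonneg k : (0 : ℝ) ≤ k)])).congr_fun
    (fun x _ => ?_) measurableSet_Ioi
  simp only [rpow_natCast]
  ring_nf

theorem integral_Ioi_exp_neg_sq_div_two_mul_pow (k : ℕ) :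
    ∫ x in Set.Ioi (0 : ℝ), exp (-x ^ 2 / 2) * x ^ k
      = 2 ^ (((k : ℝ) - 1) / 2) * Gamma (((k : ℝ) + 1) / 2) := by
  have hgamma := integral_rpow_mul_exp_neg_mul_rpow (p := 2) (q := k) (b := 1 / 2)
    (by norm_num) (by linarith [(Nat.cast_nonneg k : (0 : ℝ) ≤ k)]) (by norm_num)
  have hintegrand : (fun x : ℝ => exp (-x ^ 2 / 2) * x ^ k)
      = fun x => x ^ (k : ℝ) * exp (-(1 / 2) * x ^ (2 : ℝ)) := by
    ext x
    rw [rpow_natCast, rpow_two]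
    ring_nf
  rw [hintegrand, hgamma, one_div, inv_rpow zero_le_two, ← rpow_neg zero_le_two,
    ← div_eq_mul_inv, ← rpow_sub_one two_ne_zero]
  congr 2
  ring

theorem integral_Ioi_exp_neg_sq_div_two_mul_add_pow (A : ℝ) (m : ℕ) :
    ∫ x in Set.Ioi (0 : ℝ), exp (-x ^ 2 / 2) * (A + x) ^ m
      = ∑ i ∈ range (m + 1), (m.choose i : ℝ) * A ^ i *
          (2 ^ ((((m - i : ℕ) : ℝ) - 1) / 2) * Gamma ((((m - i : ℕ) : ℝ) + 1) / 2)) := by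
  have hexpand : ∀ x : ℝ, exp (-x ^ 2 / 2) * (A + x) ^ m
      = ∑ i ∈ range (m + 1), (m.choose i : ℝ) * A ^ i * (exp (-x ^ 2 / 2) * x ^ (m - i)) := by
    intro x
    rw [add_pow, mul_sum]
    exact sum_congr rfl fun i _ => by ring
  simp_rw [hexpand]
  rw [integral_finsetSum _ fun i _ =>
    (integrableOn_Ioi_exp_neg_sq_div_two_mul_pow (m - i)).const_mul _]
  simp_rw [integral_const_mul, integral_Ioi_exp_neg_sq_div_two_mul_pow]

theorem kn_formula_general (n : ℕ) (hn : 1 ≤ n) (A : ℝ) :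
    (2 / (2^((n : ℝ)/2) * Real.Gamma ((n : ℝ)/2))) *
      ∫ r in Set.Ioi A, Real.exp (-(r - A)^2/2) * r^(n - 1) =
    ∑ i ∈ Finset.range n,
      ((n - 1).choose i : ℝ) * Real.Gamma (((n : ℝ) - (i : ℝ))/2)
        / (2^((i : ℝ)/2) * Real.Gamma ((n : ℝ)/2)) * A^i := by
  obtain ⟨m, rfl⟩ : ∃ m, n = m + 1 := ⟨n - 1, by omega⟩
  rw [setIntegral_Ioi_eq_setIntegral_Ioi_zero_add, Nat.add_sub_cancel]
  simp only [add_sub_cancel_left]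
  rw [integral_Ioi_exp_neg_sq_div_two_mul_add_pow, mul_sum]
  refine sum_congr rfl fun i hi => ?_
  have him : i ≤ m := Nat.lt_succ_iff.mp (mem_range.mp hi)
  have hpow : (2 : ℝ) ^ ((((m - i : ℕ) : ℝ) - 1) / 2) * 2 ^ ((i : ℝ) / 2) * 2
      = 2 ^ (((m + 1 : ℕ) : ℝ) / 2) := by
    rw [← rpow_add two_pos, ← rpow_add_one two_ne_zero, Nat.cast_sub him]
    congr 1
    push_cast
    ring
  have hgamma : (((m - i : ℕ) : ℝ) + 1) / 2 = (((m + 1 : ℕ) : ℝ) - i) / 2 := by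
    rw [Nat.cast_sub him]
    push_cast
    ring
  have hG : Gamma (((m + 1 : ℕ) : ℝ) / 2) ≠ 0 := (Gamma_pos_of_pos (by positivity)).ne'
  rw [hgamma, ← hpow]
  field_simp

theorem kn_formula (n : ℕ) (hn : 1 ≤ n) (A : ℝ) (hA : 0 < A) :
    (2 / (2^((n : ℝ)/2) * Real.Gamma ((n : ℝ)/2))) *
      ∫ r in Set.Ioi A, Real.exp (-(r - A)^2/2) * r^(n - 1) =
    ∑ i ∈ Finset.range n,
      ((n - 1).choose i : ℝ) * Real.Gamma (((n : ℝ) - (i : ℝ))/2)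
        / (2^((i : ℝ)/2) * Real.Gamma ((n : ℝ)/2)) * A^i :=
  kn_formula_general n hn A
end

section
/- For integers n ≥ 2, nonnegative integer k, and A > 0, ∫_A^∞ (z^{2k+2}/(n+2k) − z^{2k}) · ((z−A)²/2) · z^{n−1} e^{-z²/2} dz ≥ 0. -/
/-!
With `c = n + 2k`, the integrand is `-(1/c) · (x - A)²/2 · G'(x)` for the polynomial-times-Gaussian
`G(x) = x^c e^{-x²/2}`, since `G' = (c x^(c-1) - x^(c+1)) e^{-x²/2}`. Integrating by parts, the
boundary terms vanish (`(x - A)²` at `A`, the Gaussian at `∞`), so the integral equals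
`(1/c) ∫_A^∞ (x - A) G(x) dx ≥ 0`.
-/

open MeasureTheory Real Polynomial Filter Topology Set

lemma integrable_pow_mul_exp_neg_sq_div_two (j : ℕ) :
    Integrable fun x : ℝ => x ^ j * exp (-x ^ 2 / 2) := by
  refine (integrable_rpow_mul_exp_neg_mul_sq (b := 1 / 2) (by norm_num)
    (s := j) (by linarith [(j.cast_nonneg : (0 : ℝ) ≤ j)])).congr (ae_of_all _ fun x => ?_)
  simp only [rpow_natCast]
  ring_nf

lemma tendsto_pow_mul_exp_neg_sq_div_two_atTop (j : ℕ) :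
    Tendsto (fun x : ℝ => x ^ j * exp (-x ^ 2 / 2)) atTop (𝓝 0) := by
  refine ((tendsto_rpow_abs_mul_exp_neg_mul_sq_cocompact (a := 1 / 2) (by norm_num) j).mono_left
    atTop_le_cocompact).congr' ?_
  filter_upwards [eventually_ge_atTop 0] with x hx
  rw [abs_of_nonneg hx, rpow_natCast]
  ring_nf

namespace Polynomial

lemma integrable_eval_mul_exp_neg_sq_div_two (P : ℝ[X]) :
    Integrable fun x => P.eval x * exp (-x ^ 2 / 2) := by
  induction P using Polynomial.induction_on' with
  | add p q hp hq =>
    refine (hp.add hq).congr (ae_of_all _ fun x => ?_)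
    simp only [eval_add, add_mul, Pi.add_apply]
  | monomial j a =>
    simpa only [eval_monomial, mul_assoc] using
      (integrable_pow_mul_exp_neg_sq_div_two j).const_mul a

lemma tendsto_eval_mul_exp_neg_sq_div_two_atTop (P : ℝ[X]) :
    Tendsto (fun x => P.eval x * exp (-x ^ 2 / 2)) atTop (𝓝 0) := by
  induction P using Polynomial.induction_on' with
  | add p q hp hq => simpa only [eval_add, add_mul, add_zero] using hp.add hq
  | monomial j a =>
    simpa only [eval_monomial, mul_assoc, mul_zero] using
      (tendsto_pow_mul_exp_neg_sq_div_two_atTop j).const_mul a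

lemma hasDerivAt_eval_mul_exp_neg_sq_div_two (P : ℝ[X]) (x : ℝ) :
    HasDerivAt (fun x => P.eval x * exp (-x ^ 2 / 2))
      ((derivative P - X * P).eval x * exp (-x ^ 2 / 2)) x := by
  have hsq : HasDerivAt (fun x : ℝ => -x ^ 2 / 2) (-x) x := by
    refine ((hasDerivAt_pow 2 x).neg.div_const 2).congr_deriv ?_
    ring
  refine ((P.hasDerivAt x).mul hsq.exp).congr_deriv ?_
  simp only [eval_sub, eval_mul, eval_X]
  ring

lemma integral_Ioi_half_sq_sub_mul_deriv (P : ℝ[X]) (A : ℝ) :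
    ∫ x in Ioi A, (x - A) ^ 2 / 2 * ((derivative P - X * P).eval x * exp (-x ^ 2 / 2)) =
      -∫ x in Ioi A, (x - A) * (P.eval x * exp (-x ^ 2 / 2)) := by
  have hu (x : ℝ) : HasDerivAt (fun x => (x - A) ^ 2 / 2) (x - A) x := by
    simpa using (((hasDerivAt_id x).sub_const A).pow 2).div_const 2
  have hv (x : ℝ) := P.hasDerivAt_eval_mul_exp_neg_sq_div_two x
  have key := integral_Ioi_mul_deriv_eq_deriv_mul (a := A) (a' := 0) (b' := 0)
    (fun x _ => hu x) (fun x _ => hv x) ?_ ?_ ?_ ?_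
  · simpa using key
  · refine (integrable_eval_mul_exp_neg_sq_div_two
      (C (1 / 2) * (X - C A) ^ 2 * (derivative P - X * P))).integrableOn.congr_fun
      (fun x _ => ?_) measurableSet_Ioi
    simp only [eval_mul, eval_pow, eval_sub, eval_X, eval_C, Pi.mul_apply]
    ring
  · refine (integrable_eval_mul_exp_neg_sq_div_two ((X - C A) * P)).integrableOn.congr_fun
      (fun x _ => ?_) measurableSet_Ioi
    simp only [eval_mul, eval_sub, eval_X, eval_C, Pi.mul_apply]
    ring
  · simpa using ((hu A).continuousAt.mul (hv A).continuousAt).tendsto.mono_left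
      (nhdsWithin_le_nhds (s := Ioi A))
  · refine (tendsto_eval_mul_exp_neg_sq_div_two_atTop (C (1 / 2) * (X - C A) ^ 2 * P)).congr
      fun x => ?_
    simp only [eval_mul, eval_pow, eval_sub, eval_X, eval_C, Pi.mul_apply]
    ring

end Polynomial

theorem integral_weighted_nonneg (n : ℕ) (hn : 2 ≤ n) (k : ℕ) (A : ℝ) (hA : 0 < A) :
    0 ≤ ∫ z in Set.Ioi A,
      (z^(2*k + 2) / (n + 2*k) - z^(2*k)) * ((z - A)^2 / 2) * z^(n - 1)
        * Real.exp (-z^2/2) := by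
  obtain ⟨m, rfl⟩ : ∃ m, n = m + 1 := ⟨n - 1, by omega⟩
  set c : ℝ := (m + 1 : ℕ) + 2 * k
  have hc : 0 < c := by positivity
  set P : ℝ[X] := X ^ (m + 2 * k + 1)
  have hintegrand (z : ℝ) :
      (z ^ (2 * k + 2) / c - z ^ (2 * k)) * ((z - A) ^ 2 / 2) * z ^ (m + 1 - 1)
          * exp (-z ^ 2 / 2) =
        -c⁻¹ * ((z - A) ^ 2 / 2 * ((derivative P - X * P).eval z * exp (-z ^ 2 / 2))) := by
    simp only [P, derivative_X_pow, eval_sub, eval_mul, eval_C, eval_pow, eval_X,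
      Nat.add_sub_cancel]
    field_simp
    push_cast [c]
    ring
  calc (0 : ℝ) ≤ c⁻¹ * ∫ z in Ioi A, (z - A) * (P.eval z * exp (-z ^ 2 / 2)) := by
        refine mul_nonneg (inv_nonneg.2 hc.le) (setIntegral_nonneg measurableSet_Ioi fun z hz => ?_)
        have hz₀ : 0 < z := hA.trans hz
        simp only [P, eval_pow, eval_X]
        exact mul_nonneg (sub_nonneg.2 hz.le) (by positivity)
    _ = _ := by
        simp_rw [hintegrand, integral_const_mul, integral_Ioi_half_sq_sub_mul_deriv]
        ring
end
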